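/- arXiv:1404.1754 — 6 statements merged into one kernel-verified Lean document; each statement's English description precedes it below -/
import Mathlib

section
/- The bilinear form ω(X,Y) = tr(X[D,Y]) on the Lie algebra 𝔤 of bounded skew-adjoint operators X with [D,X] Hilbert–Schmidt is a Lie algebra 2-cocycle: it is skew-symmetric and satisfies ω(X,[Y,Z]) + ω(Y,[Z,X]) + ω(Z,[X,Y]) = 0 for all X,Y,Z ∈ 𝔤. -/
noncomputable section

open scoped ENNReal

/-- The Hilbert space `ℓ²(ℤ, ℂ)` with orthonormal basis `(e n)_{n ∈ ℤ}`. -/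
abbrev H : Type := lp (fun _ : ℤ => ℂ) 2

/-- The standard orthonormal basis vectors. -/
def e (n : ℤ) : H := lp.single 2 n (1 : ℂ)

/-- The matrix entry `⟨e i, X (e j)⟩` of a bounded operator. -/
def entry (X : H →L[ℂ] H) (i j : ℤ) : ℂ := inner ℂ (e i) (X (e j))

/-- The matrix entry of the commutator `[D, X]`, where `D e_n = n e_n`:
`([D,X])_{ij} = (i - j) X_{ij}`. -/
def commDEntry (X : H →L[ℂ] H) (i j : ℤ) : ℂ := ((i : ℂ) - (j : ℂ)) * entry X i j

/-- Membership in the Lie algebra `𝔤`: bounded skew-adjoint operators `X`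
with `[D, X]` Hilbert–Schmidt (square-summable matrix entries). -/
def InG (X : H →L[ℂ] H) : Prop :=
  ContinuousLinearMap.adjoint X = -X ∧
    Summable (fun p : ℤ × ℤ => ‖commDEntry X p.1 p.2‖ ^ 2)

/-- The conditional trace `ω(X,Y) = tr_c (X [D,Y])`, computed in the basis `(e n)`. -/
def omegaCocycle (X Y : H →L[ℂ] H) : ℂ :=
  ∑' n : ℤ, ∑' m : ℤ, entry X n m * commDEntry Y m n

/-!
Write `δa` for the matrix of `[D, a]`, so `(δa)ₙₘ = (n - m) aₙₘ` and
`ω(X, W) = -∑ₙₘ (δX)ₙₘ Wₘₙ`. Since `|n - m| ≥ 1` off the diagonal, the off-diagonal part `X°`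
of any `X ∈ 𝔤` is Hilbert–Schmidt, while its diagonal is bounded by `‖X‖`.

Split `[Y, Z] = [Y°, Z°] + [diag Y, Z] - [diag Z, Y]`. The first part only produces traces of
products of three Hilbert–Schmidt matrices; these converge absolutely, hence are cyclic, and in
the cyclic sum they combine into `tr(δa b c) + tr(a δb c) + tr(a b δc)`, which vanishes because
`(n - m) + (m - k) + (k - n) = 0`. The diagonal parts give the pairings `tr(δX [diag u, Z])`,
which are symmetric in `X` and `Z` and cancel in pairs. Skew-symmetry is a swap of indices in an
absolutely convergent double sum.
-/

section SquareSummable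

variable {α : Type*}

theorem summable_mul_and_sq_tsum_mul_le {f g : α → ℝ} (hf₀ : ∀ i, 0 ≤ f i) (hg₀ : ∀ i, 0 ≤ g i)
    (hf : Summable fun i => f i ^ 2) (hg : Summable fun i => g i ^ 2) :
    (Summable fun i => f i * g i) ∧
      (∑' i, f i * g i) ^ 2 ≤ (∑' i, f i ^ 2) * ∑' i, g i ^ 2 := by
  obtain ⟨hfg, hle⟩ := Real.summable_and_inner_le_Lp_mul_Lq_tsum_of_nonneg .two_two hf₀ hg₀
    (by simpa only [Real.rpow_two] using hf) (by simpa only [Real.rpow_two] using hg)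
  simp only [Real.rpow_two, ← Real.sqrt_eq_rpow] at hle
  refine ⟨hfg, ?_⟩
  calc (∑' i, f i * g i) ^ 2 ≤ (√(∑' i, f i ^ 2) * √(∑' i, g i ^ 2)) ^ 2 :=
        pow_le_pow_left₀ (tsum_nonneg fun i => mul_nonneg (hf₀ i) (hg₀ i)) hle 2
    _ = (∑' i, f i ^ 2) * ∑' i, g i ^ 2 := by
        rw [mul_pow, Real.sq_sqrt (tsum_nonneg fun i => sq_nonneg _),
          Real.sq_sqrt (tsum_nonneg fun i => sq_nonneg _)]

theorem summable_norm_mul_norm {E F : Type*} [SeminormedAddGroup E] [SeminormedAddGroup F]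
    {f : α → E} {g : α → F} (hf : Summable fun i => ‖f i‖ ^ 2)
    (hg : Summable fun i => ‖g i‖ ^ 2) : Summable fun i => ‖f i‖ * ‖g i‖ :=
  (summable_mul_and_sq_tsum_mul_le (fun _ => norm_nonneg _) (fun _ => norm_nonneg _) hf hg).1

end SquareSummable

section Matrix

variable {ι R : Type*}

def IsHilbertSchmidt [Norm R] (a : ι → ι → R) : Prop :=
  Summable fun p : ι × ι => ‖a p.1 p.2‖ ^ 2

def matMul [NonUnitalNonAssocSemiring R] [TopologicalSpace R] (a b : ι → ι → R) (n m : ι) : R :=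
  ∑' k, a n k * b k m

def offDiag [DecidableEq ι] [Zero R] (a : ι → ι → R) (n m : ι) : R :=
  if n = m then 0 else a n m

/-- `trace3 a b c = tr (a b c)`, summed over the index triples `((n, m), k)`. -/
def trace3 [NonUnitalNonAssocSemiring R] [TopologicalSpace R] (a b c : ι → ι → R) : R :=
  ∑' q : (ι × ι) × ι, a q.1.1 q.1.2 * b q.1.2 q.2 * c q.2 q.1.1

theorem trace3_rotate [NonUnitalCommSemiring R] [TopologicalSpace R] (a b c : ι → ι → R) :
    trace3 a b c = trace3 b c a := by
  let rot : (ι × ι) × ι ≃ (ι × ι) × ι :=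
    ⟨fun q => ((q.2, q.1.1), q.1.2), fun q => ((q.1.2, q.2), q.1.1), fun _ => rfl, fun _ => rfl⟩
  rw [trace3, trace3, ← rot.tsum_eq]
  exact tsum_congr fun _ => mul_rotate _ _ _

theorem hasSum_matMul_offDiag [DecidableEq ι] [NonUnitalNonAssocSemiring R] [TopologicalSpace R]
    [ContinuousAdd R] {a b : ι → ι → R} {m n : ι}
    (h : Summable fun k => offDiag a m k * offDiag b k n) :
    HasSum (fun k => a m k * b k n)
      (matMul (offDiag a) (offDiag b) m n + offDiag a m n * b n n + a m m * b m n) := by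
  rw [matMul]
  convert (h.hasSum.add (hasSum_ite_eq n (offDiag a m n * b n n))).add
    (hasSum_ite_eq m (a m m * b m n)) using 1
  funext k
  unfold offDiag
  split_ifs <;> subst_vars <;> simp_all

end Matrix

namespace IsHilbertSchmidt

section Norm

variable {ι E F : Type*} [SeminormedAddGroup E] [SeminormedAddGroup F]
  {a : ι → ι → E} {b : ι → ι → F}

theorem summable_row (h : IsHilbertSchmidt a) (n : ι) : Summable fun m => ‖a n m‖ ^ 2 :=
  h.prod_factor n

theorem summable_col (h : IsHilbertSchmidt a) (m : ι) : Summable fun n => ‖a n m‖ ^ 2 :=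
  h.prod_symm.prod_factor m

theorem of_norm_le (hb : IsHilbertSchmidt b) (h : ∀ n m, ‖a n m‖ ≤ ‖b n m‖) :
    IsHilbertSchmidt a :=
  hb.of_nonneg_of_le (fun _ => by positivity) fun p =>
    pow_le_pow_left₀ (norm_nonneg _) (h p.1 p.2) 2

theorem summable_norm_mul_transpose (ha : IsHilbertSchmidt a) (hb : IsHilbertSchmidt b) :
    Summable fun p : ι × ι => ‖a p.1 p.2‖ * ‖b p.2 p.1‖ :=
  summable_norm_mul_norm ha hb.prod_symm

theorem matMul_norm (ha : IsHilbertSchmidt a) (hb : IsHilbertSchmidt b) :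
    IsHilbertSchmidt (matMul (fun n m => ‖a n m‖) (fun n m => ‖b n m‖)) := by
  have hle : ∀ n m, ‖matMul (fun n m => ‖a n m‖) (fun n m => ‖b n m‖) n m‖ ^ 2 ≤
      (∑' k, ‖a n k‖ ^ 2) * ∑' k, ‖b k m‖ ^ 2 := fun n m => by
    rw [Real.norm_eq_abs, sq_abs]
    exact (summable_mul_and_sq_tsum_mul_le (fun _ => norm_nonneg _) (fun _ => norm_nonneg _)
      (ha.summable_row n) (hb.summable_col m)).2
  refine Summable.of_nonneg_of_le (fun _ => by positivity) (fun p => hle p.1 p.2) ?_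
  exact ha.prod.mul_of_nonneg hb.prod_symm.prod (fun _ => tsum_nonneg fun _ => by positivity)
    (fun _ => tsum_nonneg fun _ => by positivity)

end Norm

section Ring

variable {ι R : Type*} [NormedRing R] [CompleteSpace R] {a b c : ι → ι → R}

theorem summable_mul (ha : IsHilbertSchmidt a) (hb : IsHilbertSchmidt b) (n m : ι) :
    Summable fun k => a n k * b k m :=
  .of_norm_bounded (summable_norm_mul_norm (ha.summable_row n) (hb.summable_col m))
    fun _ => norm_mul_le _ _

theorem summable_trace3 (ha : IsHilbertSchmidt a) (hb : IsHilbertSchmidt b)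
    (hc : IsHilbertSchmidt c) :
    Summable fun q : (ι × ι) × ι => a q.1.1 q.1.2 * b q.1.2 q.2 * c q.2 q.1.1 := by
  refine .of_norm_bounded (g := fun q => ‖a q.1.1 q.1.2‖ * (‖b q.1.2 q.2‖ * ‖c q.2 q.1.1‖)) ?_
    fun _ => norm_mul₃_le.trans_eq (mul_assoc _ _ _)
  refine (summable_prod_of_nonneg fun _ => by positivity).2 ⟨fun p => ?_, ?_⟩
  · exact (summable_norm_mul_norm (hb.summable_row p.2) (hc.summable_col p.1)).mul_left
      ‖a p.1 p.2‖
  · refine (ha.summable_norm_mul_transpose (hb.matMul_norm hc)).congr fun p => ?_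
    change ‖a p.1 p.2‖ * ‖∑' k, ‖b p.2 k‖ * ‖c k p.1‖‖ =
      ∑' k, ‖a p.1 p.2‖ * (‖b p.2 k‖ * ‖c k p.1‖)
    rw [Real.norm_of_nonneg (tsum_nonneg fun _ => by positivity), tsum_mul_left]

theorem hasSum_trace3 (ha : IsHilbertSchmidt a) (hb : IsHilbertSchmidt b)
    (hc : IsHilbertSchmidt c) :
    HasSum (fun p : ι × ι => a p.1 p.2 * matMul b c p.2 p.1) (trace3 a b c) := by
  refine (ha.summable_trace3 hb hc).hasSum.prod_fiberwise fun p => ?_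
  simpa only [mul_assoc, matMul] using (hb.summable_mul hc p.2 p.1).hasSum.mul_left (a p.1 p.2)

end Ring

end IsHilbertSchmidt

/-- The matrix of `[D, a]`; by definition `commDEntry X = commD (entry X)`. -/
def commD (a : ℤ → ℤ → ℂ) (n m : ℤ) : ℂ := ((n : ℂ) - (m : ℂ)) * a n m

/-- `diagPairing a u c = tr ([D, a] [diag u, c])`. -/
def diagPairing (a : ℤ → ℤ → ℂ) (u : ℤ → ℂ) (c : ℤ → ℤ → ℂ) : ℂ :=
  ∑' p : ℤ × ℤ, commD a p.1 p.2 * ((u p.2 - u p.1) * c p.2 p.1)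
section CommD

variable {a b c : ℤ → ℤ → ℂ}

theorem commD_offDiag (a : ℤ → ℤ → ℂ) : commD (offDiag a) = commD a := by
  funext n m
  by_cases h : n = m <;> simp [commD, offDiag, h]

theorem norm_le_norm_commD (a : ℤ → ℤ → ℂ) {n m : ℤ} (h : n ≠ m) : ‖a n m‖ ≤ ‖commD a n m‖ := by
  rw [commD, norm_mul]
  refine le_mul_of_one_le_left (norm_nonneg _) ?_
  rw [← Int.cast_sub, Complex.norm_intCast]
  exact_mod_cast Int.one_le_abs (sub_ne_zero.2 h)

theorem IsHilbertSchmidt.offDiag_of_commD (h : IsHilbertSchmidt (commD a)) :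
    IsHilbertSchmidt (offDiag a) :=
  h.of_norm_le fun n m => by
    by_cases hnm : n = m
    · simp [offDiag, hnm]
    · rw [offDiag, if_neg hnm]
      exact norm_le_norm_commD a hnm

theorem summable_mul_commD (ha : IsHilbertSchmidt (commD a)) (hb : IsHilbertSchmidt (commD b)) :
    Summable fun p : ℤ × ℤ => a p.1 p.2 * commD b p.2 p.1 := by
  refine .of_norm_bounded (ha.summable_norm_mul_transpose hb) fun p => ?_
  rcases eq_or_ne p.1 p.2 with h | h
  · simp [h, commD]
  · rw [norm_mul]
    exact mul_le_mul_of_nonneg_right (norm_le_norm_commD a h) (norm_nonneg _)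

theorem trace3_commD_cyclic (ha : IsHilbertSchmidt a) (hb : IsHilbertSchmidt b)
    (hc : IsHilbertSchmidt c) (hda : IsHilbertSchmidt (commD a))
    (hdb : IsHilbertSchmidt (commD b)) (hdc : IsHilbertSchmidt (commD c)) :
    trace3 (commD a) b c + trace3 (commD b) c a + trace3 (commD c) a b = 0 := by
  rw [← trace3_rotate a (commD b) c, ← trace3_rotate b (commD c) a,
    ← trace3_rotate a b (commD c), trace3, trace3, trace3,
    ← (hda.summable_trace3 hb hc).tsum_add (ha.summable_trace3 hdb hc),
    ← ((hda.summable_trace3 hb hc).add (ha.summable_trace3 hdb hc)).tsum_add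
      (ha.summable_trace3 hb hdc)]
  refine (tsum_congr fun q => ?_).trans tsum_zero
  simp only [commD]
  ring

theorem trace3_commD_offDiag_cyclic (ha : IsHilbertSchmidt (commD a))
    (hb : IsHilbertSchmidt (commD b)) (hc : IsHilbertSchmidt (commD c)) :
    trace3 (commD a) (offDiag b) (offDiag c) + trace3 (commD b) (offDiag c) (offDiag a) +
      trace3 (commD c) (offDiag a) (offDiag b) = 0 := by
  have h := trace3_commD_cyclic ha.offDiag_of_commD hb.offDiag_of_commD hc.offDiag_of_commD
    (by rwa [commD_offDiag]) (by rwa [commD_offDiag]) (by rwa [commD_offDiag])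
  rwa [commD_offDiag, commD_offDiag, commD_offDiag] at h

theorem diagPairing_comm (a : ℤ → ℤ → ℂ) (u : ℤ → ℂ) (c : ℤ → ℤ → ℂ) :
    diagPairing a u c = diagPairing c u a := by
  rw [diagPairing, diagPairing, ← (Equiv.prodComm ℤ ℤ).tsum_eq]
  refine tsum_congr fun p => ?_
  simp only [commD, Equiv.prodComm_apply, Prod.fst_swap, Prod.snd_swap]
  ring

theorem summable_diagPairing {u : ℤ → ℂ} {C : ℝ} (ha : IsHilbertSchmidt (commD a))
    (hc : IsHilbertSchmidt (commD c)) (hu : ∀ n, ‖u n‖ ≤ C) :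
    Summable fun p : ℤ × ℤ => commD a p.1 p.2 * ((u p.2 - u p.1) * c p.2 p.1) := by
  have hC : 0 ≤ C := (norm_nonneg _).trans (hu 0)
  have hgap : ∀ n m, ‖(u m - u n) * c m n‖ ≤ 2 * C * ‖commD c m n‖ := fun n m => by
    rcases eq_or_ne m n with rfl | h
    · simp only [sub_self, zero_mul, norm_zero]
      positivity
    · rw [norm_mul]
      exact mul_le_mul ((norm_sub_le _ _).trans (by linarith [hu m, hu n]))
        (norm_le_norm_commD c h) (norm_nonneg _) (by positivity)
  refine .of_norm_bounded ((ha.summable_norm_mul_transpose hc).mul_left (2 * C)) fun p => ?_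
  rw [norm_mul, mul_left_comm]
  exact mul_le_mul_of_nonneg_left (hgap _ _) (norm_nonneg _)

end CommD

theorem inner_e_left (v : H) (n : ℤ) : inner ℂ (e n) v = v n := by
  simp [e, lp.inner_single_left, RCLike.inner_apply]

theorem norm_entry_le (X : H →L[ℂ] H) (n m : ℤ) : ‖entry X n m‖ ≤ ‖X‖ := by
  have he : ∀ k, ‖e k‖ = 1 := fun k => by simp [e, lp.norm_single]
  calc ‖entry X n m‖ ≤ ‖e n‖ * ‖X (e m)‖ := norm_inner_le_norm _ _
    _ ≤ ‖X‖ := by simpa [he] using X.le_opNorm (e m)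

theorem entry_sub (A B : H →L[ℂ] H) (n m : ℤ) : entry (A - B) n m = entry A n m - entry B n m := by
  simp [entry]

theorem hasSum_entry_mul (Y Z : H →L[ℂ] H) (m n : ℤ) :
    HasSum (fun k => entry Y m k * entry Z k n) (entry (Y * Z) m n) := by
  refine (((innerSL ℂ (e m)).comp Y).hasSum
    (lp.hasSum_single ENNReal.ofNat_ne_top (Z (e n)))).congr_fun fun k => ?_
  have hsingle : ∀ c : ℂ, lp.single 2 k c = c • e k := fun c => by
    rw [e, ← lp.single_smul]
    norm_num
  simp [hsingle, entry, inner_e_left, mul_comm]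

theorem omegaCocycle_eq_tsum {X W : H →L[ℂ] H}
    (h : Summable fun p : ℤ × ℤ => entry X p.1 p.2 * commDEntry W p.2 p.1) :
    omegaCocycle X W = ∑' p : ℤ × ℤ, entry X p.1 p.2 * commDEntry W p.2 p.1 :=
  h.tsum_prod.symm

theorem omegaCocycle_antisymm {X Y : H →L[ℂ] H} (hX : IsHilbertSchmidt (commD (entry X)))
    (hY : IsHilbertSchmidt (commD (entry Y))) : omegaCocycle X Y = -omegaCocycle Y X := by
  rw [omegaCocycle_eq_tsum (summable_mul_commD hX hY),
    omegaCocycle_eq_tsum (summable_mul_commD hY hX), ← (Equiv.prodComm ℤ ℤ).tsum_eq, ← tsum_neg]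
  refine tsum_congr fun p => ?_
  simp only [commDEntry, Equiv.prodComm_apply, Prod.fst_swap, Prod.snd_swap]
  ring

theorem entry_mul_eq_offDiag {Y Z : H →L[ℂ] H} (hY : IsHilbertSchmidt (offDiag (entry Y)))
    (hZ : IsHilbertSchmidt (offDiag (entry Z))) (m n : ℤ) :
    entry (Y * Z) m n = matMul (offDiag (entry Y)) (offDiag (entry Z)) m n +
      offDiag (entry Y) m n * entry Z n n + entry Y m m * entry Z m n :=
  (hasSum_entry_mul Y Z m n).unique (hasSum_matMul_offDiag (hY.summable_mul hZ m n))

theorem omegaCocycle_commutator {X Y Z : H →L[ℂ] H} (hX : IsHilbertSchmidt (commD (entry X)))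
    (hY : IsHilbertSchmidt (commD (entry Y))) (hZ : IsHilbertSchmidt (commD (entry Z))) :
    omegaCocycle X (Y * Z - Z * Y) =
      -(trace3 (commD (entry X)) (offDiag (entry Y)) (offDiag (entry Z)) -
          trace3 (commD (entry X)) (offDiag (entry Z)) (offDiag (entry Y)) +
          diagPairing (entry X) (fun n => entry Y n n) (entry Z) -
          diagPairing (entry X) (fun n => entry Z n n) (entry Y)) := by
  have hY' := hY.offDiag_of_commD
  have hZ' := hZ.offDiag_of_commD
  have h : HasSum (fun p : ℤ × ℤ => entry X p.1 p.2 * commDEntry (Y * Z - Z * Y) p.2 p.1) _ :=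
    ((((hX.hasSum_trace3 hY' hZ').sub (hX.hasSum_trace3 hZ' hY')).add
      (summable_diagPairing hX hZ fun n => norm_entry_le Y n n).hasSum).sub
      (summable_diagPairing hX hY fun n => norm_entry_le Z n n).hasSum).neg.congr_fun fun p => ?_
  · exact (omegaCocycle_eq_tsum h.summable).trans h.tsum_eq
  · obtain ⟨n, m⟩ := p
    simp only [commDEntry, entry_sub, entry_mul_eq_offDiag hY' hZ', entry_mul_eq_offDiag hZ' hY']
    rcases eq_or_ne n m with rfl | h
    · simp [commD]
    · simp only [commD, offDiag, if_neg h.symm]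
      ring

/-- The bilinear form `ω(X,Y) = tr (X [D,Y])` on `𝔤` is a Lie algebra 2-cocycle:
skew-symmetric and satisfying the cocycle identity. -/
theorem omega_is_two_cocycle :
    (∀ X Y : H →L[ℂ] H, InG X → InG Y → omegaCocycle X Y = - omegaCocycle Y X) ∧
    (∀ X Y Z : H →L[ℂ] H, InG X → InG Y → InG Z →
      omegaCocycle X (Y * Z - Z * Y) + omegaCocycle Y (Z * X - X * Z) +
        omegaCocycle Z (X * Y - Y * X) = 0) := by
  refine ⟨fun X Y hX hY => omegaCocycle_antisymm hX.2 hY.2, fun X Y Z hX hY hZ => ?_⟩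
  rw [omegaCocycle_commutator hX.2 hY.2 hZ.2, omegaCocycle_commutator hY.2 hZ.2 hX.2,
    omegaCocycle_commutator hZ.2 hX.2 hY.2]
  linear_combination -trace3_commD_offDiag_cyclic hX.2 hY.2 hZ.2 +
    trace3_commD_offDiag_cyclic hX.2 hZ.2 hY.2 -
    diagPairing_comm (entry X) (fun n => entry Y n n) (entry Z) +
    diagPairing_comm (entry X) (fun n => entry Z n n) (entry Y) +
    diagPairing_comm (entry Y) (fun n => entry X n n) (entry Z)
end
end

section
/- For X,Y in the Lie algebra 𝔤 of bounded skew-adjoint operators with [D,X] Hilbert–Schmidt, the conditional trace tr(X[D,Y]) = Σ_n ⟨e_n, X[D,Y]e_n⟩ converges absolutely. -/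
noncomputable section

open scoped ENNReal

/-! Off the diagonal `|n - m| ≥ 1`, so `‖X_{nm} [D,Y]_{mn}‖ ≤ ‖[D,X]_{nm}‖ ‖[D,Y]_{mn}‖`, and on the
diagonal the left side vanishes. Both commutators being Hilbert–Schmidt, the right side is summable
over `ℤ × ℤ` by Cauchy–Schwarz, and absolute summability of the double series gives both claims. -/

lemma norm_entry_mul_commDEntry_le (X Y : H →L[ℂ] H) (n m : ℤ) :
    ‖entry X n m * commDEntry Y m n‖ ≤ ‖commDEntry X n m‖ * ‖commDEntry Y m n‖ := by
  rcases eq_or_ne n m with rfl | hnm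
  · simp [commDEntry]
  · have one_le : (1 : ℝ) ≤ ‖(n : ℂ) - m‖ := by
      rw [← Int.cast_sub, Complex.norm_intCast]
      exact_mod_cast Int.one_le_abs (sub_ne_zero.2 hnm)
    simp only [commDEntry, norm_mul]
    gcongr
    exact le_mul_of_one_le_left (norm_nonneg _) one_le

lemma summable_norm_mul_of_summable_norm_sq {ι E F : Type*} [SeminormedAddCommGroup E]
    [SeminormedAddCommGroup F] {f : ι → E} {g : ι → F}
    (hf : Summable fun i => ‖f i‖ ^ 2) (hg : Summable fun i => ‖g i‖ ^ 2) :
    Summable fun i => ‖f i‖ * ‖g i‖ :=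
  Real.summable_mul_of_Lp_Lq_of_nonneg Real.HolderConjugate.two_two (fun _ => norm_nonneg _)
    (fun _ => norm_nonneg _) (by simpa only [Real.rpow_two] using hf)
    (by simpa only [Real.rpow_two] using hg)

lemma summable_norm_tsum_of_summable_norm_prod {α β E : Type*} [NormedAddCommGroup E]
    [CompleteSpace E] {f : α × β → E} (hf : Summable fun p => ‖f p‖) :
    Summable fun a => ‖∑' b, f (a, b)‖ :=
  ((summable_prod_of_nonneg fun _ => norm_nonneg _).1 hf).2.of_nonneg_of_le
    (fun _ => norm_nonneg _) fun a => norm_tsum_le_tsum_norm (hf.prod_factor a)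

/-- For `X, Y ∈ 𝔤`, the conditional trace `tr (X[D,Y]) = Σ_n ⟨e_n, X[D,Y] e_n⟩`
converges absolutely: the sequence of diagonal matrix elements of `X[D,Y]`
(in the fixed basis) is absolutely summable. -/
theorem conditional_trace_absolutely_convergent (X Y : H →L[ℂ] H)
    (hX : InG X) (hY : InG Y) :
    Summable (fun n : ℤ => ‖∑' m : ℤ, entry X n m * commDEntry Y m n‖) ∧
    ∀ n : ℤ, Summable (fun m : ℤ => ‖entry X n m * commDEntry Y m n‖) := by
  have hHS : Summable fun p : ℤ × ℤ => ‖commDEntry X p.1 p.2‖ * ‖commDEntry Y p.2 p.1‖ :=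
    summable_norm_mul_of_summable_norm_sq hX.2 hY.2.prod_symm
  have hf : Summable fun p : ℤ × ℤ => ‖entry X p.1 p.2 * commDEntry Y p.2 p.1‖ :=
    hHS.of_nonneg_of_le (fun _ => norm_nonneg _) fun p => norm_entry_mul_commDEntry_le X Y p.1 p.2
  exact ⟨summable_norm_tsum_of_summable_norm_prod
    (f := fun p : ℤ × ℤ => entry X p.1 p.2 * commDEntry Y p.2 p.1) hf, hf.prod_factor⟩
end
end

section
/- The additive group of bounded integer sequences (a_k)_{k∈ℤ} ∈ ℓ∞(ℤ,ℤ) modulo the subgroup of sequences with finitely many nonzero entries is a free abelian group of cardinality 2^{ℵ₀}. -/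
/-- The additive group of bounded integer sequences `(a_k)_{k ∈ ℤ}`. -/
def boundedIntSeq : AddSubgroup (ℤ → ℤ) where
  carrier := {f | ∃ C : ℤ, ∀ k, |f k| ≤ C}
  zero_mem' := ⟨0, fun k => by simp⟩
  add_mem' := by
    rintro f g ⟨C, hC⟩ ⟨C', hC'⟩
    exact ⟨C + C', fun k => (abs_add_le _ _).trans (add_le_add (hC k) (hC' k))⟩
  neg_mem' := by
    rintro f ⟨C, hC⟩
    exact ⟨C, fun k => by simpa using hC k⟩

/-- The subgroup of bounded integer sequences with only finitely many nonzero
entries. -/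
def finitelySupported : AddSubgroup boundedIntSeq where
  carrier := {f | (Function.support (f : ℤ → ℤ)).Finite}
  zero_mem' := by simp
  add_mem' := by
    intro f g hf hg
    exact ((hf.union hg).subset (Function.support_add _ _))
  neg_mem' := by
    intro f hf
    simpa [Function.support_neg] using hf

/-!
Taking limits along ultrafilters identifies `boundedIntSeq ⧸ finitelySupported` with the group
of locally constant `ℤ`-valued functions on the profinite space `βℤ \ ℤ` of free ultrafilters.
A bounded sequence has finite range, hence a limit along every ultrafilter; this limit vanishes
at every free ultrafilter exactly when the support is finite; and every clopen subset of
`βℤ \ ℤ` is cut out by some `A ⊆ ℤ`, whose indicator therefore has the characteristic function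
of that clopen as its limit. Nöbeling's theorem makes the locally constant functions on a
profinite space a free abelian group. For the cardinality, `ℤ ≃ ℕ × ℕ` spreads each
`r : ℕ → Bool` over infinitely many copies of `ℕ`, which gives `2 ^ ℵ₀` sequences that pairwise
differ at infinitely many places.
-/

open Filter Set

namespace Ultrafilter

variable {α β : Type*}

def freeUltrafilters (α : Type*) : Set (Ultrafilter α) := {u | (u : Filter α) ≤ cofinite}

lemma notMem_of_mem_freeUltrafilters {u : Ultrafilter α} (hu : u ∈ freeUltrafilters α)
    {s : Set α} (hs : s.Finite) : s ∉ u :=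
  fun h => compl_notMem h (hu hs.compl_mem_cofinite)

lemma forall_freeUltrafilters_notMem_iff {s : Set α} :
    (∀ u ∈ freeUltrafilters α, s ∉ u) ↔ s.Finite := by
  refine ⟨fun h => ?_, fun hs u hu => notMem_of_mem_freeUltrafilters hu hs⟩
  by_contra hs
  have := Set.Infinite.cofinite_inf_principal_neBot hs
  obtain ⟨u, hu⟩ := exists_le (cofinite ⊓ 𝓟 s)
  exact h u (hu.trans inf_le_left) (hu (mem_inf_of_right (mem_principal_self s)))

lemma isClosed_freeUltrafilters : IsClosed (freeUltrafilters α) := by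
  have : freeUltrafilters α = ⋂ s ∈ (cofinite : Filter α), {u | s ∈ u} := by
    ext u; simp [freeUltrafilters, Filter.le_def]
  rw [this]
  exact isClosed_biInter fun s _ => ultrafilter_isClosed_basic s

instance : CompactSpace (freeUltrafilters α) :=
  isCompact_iff_compactSpace.mp isClosed_freeUltrafilters.isCompact

instance : Module.Free ℤ (LocallyConstant (freeUltrafilters α) ℤ) :=
  LocallyConstant.freeOfProfinite (Profinite.of (freeUltrafilters α))

lemma exists_setOf_mem_between {K U : Set (Ultrafilter α)} (hK : IsCompact K) (hU : IsOpen U)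
    (hKU : K ⊆ U) : ∃ A : Set α, K ⊆ {u | A ∈ u} ∧ {u | A ∈ u} ⊆ U := by
  have hbasic : ∀ u : K, ∃ A : Set α, A ∈ (u : Ultrafilter α) ∧ {v | A ∈ v} ⊆ U := by
    rintro ⟨u, hu⟩
    obtain ⟨_, ⟨A, rfl⟩, huA, hAU⟩ :=
      ultrafilterBasis_is_basis.exists_subset_of_mem_open (hKU hu) hU
    exact ⟨A, huA, hAU⟩
  choose A hAu hAU using hbasic
  obtain ⟨t, ht⟩ := hK.elim_finite_subcover (fun u : K => {v | A u ∈ v})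
    (fun u => ultrafilter_isOpen_basic _) (fun u hu => mem_iUnion.mpr ⟨⟨u, hu⟩, hAu ⟨u, hu⟩⟩)
  refine ⟨⋃ u ∈ t, A u, fun v hv => ?_, fun v hv => ?_⟩
  · obtain ⟨u, hut, hv⟩ := mem_iUnion₂.mp (ht hv)
    exact (finite_biUnion_mem_iff t.finite_toSet).mpr ⟨u, hut, hv⟩
  · obtain ⟨u, -, hv⟩ := (finite_biUnion_mem_iff t.finite_toSet).mp hv
    exact hAU u hv

lemma _root_.IsClopen.exists_eq_setOf_mem {S : Set (Ultrafilter α)} (hS : IsClosed S)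
    {F : Set S} (hF : IsClopen F) : ∃ A : Set α, F = {x : S | A ∈ (x : Ultrafilter α)} := by
  obtain ⟨U, hU, rfl⟩ := isOpen_induced_iff.mp hF.isOpen
  obtain ⟨A, hUA, hAU⟩ := exists_setOf_mem_between (U := U)
    ((hS.isClosedMap_subtype_val _ hF.isClosed).isCompact) hU (image_preimage_subset _ _)
  exact ⟨A, Subset.antisymm (fun x hx => hUA (mem_image_of_mem _ hx)) fun x hx => hAU hx⟩

lemma exists_preimage_singleton_mem {f : α → β} (hf : (range f).Finite) (u : Ultrafilter α) :
    ∃ v, f ⁻¹' {v} ∈ u := by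
  have hrange : range f ∈ u.map f := by
    rw [mem_map, preimage_range]
    exact univ_mem
  obtain ⟨v, -, hv⟩ := eq_pure_of_finite_mem hf hrange
  exact ⟨v, mem_map.mp (hv ▸ mem_pure.mpr rfl)⟩

variable [Nonempty β]

-- A junk value when no fiber of `f` belongs to `u`, which needs `f` to have infinite range.
noncomputable def limVal (u : Ultrafilter α) (f : α → β) : β :=
  Classical.epsilon fun v => f ⁻¹' {v} ∈ u

lemma limVal_eq_of_mem {u : Ultrafilter α} {f : α → β} {v : β} (hv : f ⁻¹' {v} ∈ u) :
    u.limVal f = v := by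
  have hlim := Classical.epsilon_spec (p := fun w => f ⁻¹' {w} ∈ u) ⟨v, hv⟩
  obtain ⟨k, hk, hk'⟩ := nonempty_of_mem (inter_mem hlim hv)
  exact hk.symm.trans hk'

lemma preimage_limVal_mem {f : α → β} (hf : (range f).Finite) (u : Ultrafilter α) :
    f ⁻¹' {u.limVal f} ∈ u :=
  Classical.epsilon_spec (exists_preimage_singleton_mem hf u)

lemma limVal_eq_iff {f : α → β} (hf : (range f).Finite) {u : Ultrafilter α} {v : β} :
    u.limVal f = v ↔ f ⁻¹' {v} ∈ u :=
  ⟨fun h => h ▸ preimage_limVal_mem hf u, limVal_eq_of_mem⟩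

lemma limVal_add [Add β] {f g : α → β} (hf : (range f).Finite) (hg : (range g).Finite)
    (u : Ultrafilter α) : u.limVal (f + g) = u.limVal f + u.limVal g := by
  refine limVal_eq_of_mem (mem_of_superset
    (inter_mem (preimage_limVal_mem hf u) (preimage_limVal_mem hg u)) ?_)
  rintro k ⟨hfk, hgk⟩
  simp_all

open Classical in
lemma limVal_indicator_one [Zero β] [One β] (u : Ultrafilter α) (A : Set α) :
    u.limVal (A.indicator 1 : α → β) = if A ∈ u then 1 else 0 := by
  split_ifs with hA
  · exact limVal_eq_of_mem (mem_of_superset hA fun k hk => by simp [hk])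
  · exact limVal_eq_of_mem (mem_of_superset (compl_mem_iff_notMem.mpr hA) fun k hk => by simp_all)

end Ultrafilter

lemma LocallyConstant.sum_smul_charFn_fiber {X R : Type*} [TopologicalSpace X] [CompactSpace X]
    [Semiring R] (g : LocallyConstant X R) :
    ∑ v ∈ g.range_finite.toFinset, v • charFn R (g.isLocallyConstant.isClopen_fiber v) = g := by
  ext x
  rw [← LocallyConstant.evalₗ_apply R, map_sum, Finset.sum_eq_single (g x)]
  · simp [coe_charFn]
  · intro v _ hv
    simp [coe_charFn, Ne.symm hv]
  · simp

lemma Equiv.infinite_setOf_fst_eq {α β γ : Type*} [Infinite γ] (e : α ≃ β × γ) (b : β) :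
    {a | (e a).1 = b}.Infinite :=
  infinite_of_injective_forall_mem (f := fun c => e.symm (b, c))
    (fun c c' h => by simpa using h) fun c => by simp

namespace boundedIntSeq

open Ultrafilter Cardinal

lemma finite_range (f : boundedIntSeq) : (range (f : ℤ → ℤ)).Finite := by
  obtain ⟨C, hC⟩ := f.2
  exact (finite_Icc (-C) C).subset (range_subset_iff.mpr fun k => abs_le.mp (hC k))

noncomputable def limValOnFree (f : boundedIntSeq) : LocallyConstant (freeUltrafilters ℤ) ℤ where
  toFun x := (x : Ultrafilter ℤ).limVal f
  isLocallyConstant := IsLocallyConstant.iff_isOpen_fiber.mpr fun v => by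
    have hfiber : (fun x : freeUltrafilters ℤ => (x : Ultrafilter ℤ).limVal f) ⁻¹' {v}
        = Subtype.val ⁻¹' {u | (f : ℤ → ℤ) ⁻¹' {v} ∈ u} := by
      ext x
      exact limVal_eq_iff (finite_range f)
    rw [hfiber]
    exact (ultrafilter_isOpen_basic _).preimage continuous_subtype_val

noncomputable def limValHom : boundedIntSeq →+ LocallyConstant (freeUltrafilters ℤ) ℤ where
  toFun := limValOnFree
  map_zero' := by
    ext x
    exact limVal_eq_of_mem (univ_mem' fun _ => rfl)
  map_add' f g := by
    ext x
    exact limVal_add (finite_range f) (finite_range g) _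

lemma limValHom_apply (f : boundedIntSeq) (x : freeUltrafilters ℤ) :
    limValHom f x = (x : Ultrafilter ℤ).limVal f := rfl

lemma ker_limValHom : limValHom.ker = finitelySupported := by
  ext f
  have hzero (u : Ultrafilter ℤ) :
      u.limVal (f : ℤ → ℤ) = 0 ↔ Function.support (f : ℤ → ℤ) ∉ u := by
    rw [limVal_eq_iff (finite_range f), ← compl_mem_iff_notMem, Function.compl_support]
    rfl
  simp only [AddMonoidHom.mem_ker, LocallyConstant.ext_iff, limValHom_apply, hzero,
    LocallyConstant.coe_zero, Pi.zero_apply, Subtype.forall]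
  exact forall_freeUltrafilters_notMem_iff

noncomputable def indicatorSeq (A : Set ℤ) : boundedIntSeq :=
  ⟨A.indicator 1, 1, fun k => by by_cases hk : k ∈ A <;> simp [hk]⟩

lemma charFn_mem_range_limValHom {F : Set (freeUltrafilters ℤ)} (hF : IsClopen F) :
    LocallyConstant.charFn ℤ hF ∈ limValHom.range := by
  obtain ⟨A, rfl⟩ := hF.exists_eq_setOf_mem isClosed_freeUltrafilters
  refine ⟨indicatorSeq A, ?_⟩
  ext x
  by_cases hA : A ∈ (x : Ultrafilter ℤ) <;>
    simp [limValHom_apply, indicatorSeq, limVal_indicator_one, LocallyConstant.coe_charFn, hA]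

lemma limValHom_surjective : Function.Surjective limValHom := fun g => by
  rw [← AddMonoidHom.mem_range, ← g.sum_smul_charFn_fiber]
  exact AddSubgroup.sum_mem _ fun v _ => AddSubgroup.zsmul_mem _ (charFn_mem_range_limValHom _) v

noncomputable def quotientEquiv :
    (boundedIntSeq ⧸ finitelySupported) ≃+ LocallyConstant (freeUltrafilters ℤ) ℤ :=
  (QuotientAddGroup.quotientAddEquivOfEq ker_limValHom.symm).trans
    (QuotientAddGroup.quotientKerEquivOfSurjective _ limValHom_surjective)

lemma mk_quotient_le_continuum : #(boundedIntSeq ⧸ finitelySupported) ≤ 𝔠 := calc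
  #(boundedIntSeq ⧸ finitelySupported) ≤ #boundedIntSeq :=
    mk_le_of_surjective (QuotientAddGroup.mk'_surjective _)
  _ ≤ #(ℤ → ℤ) := mk_subtype_le _
  _ = 𝔠 := by
    rw [mk_arrow, mk_int, lift_aleph0, power_self_eq le_rfl, two_power_aleph0]

noncomputable def ofBoolSeq (e : ℤ ≃ ℕ × ℕ) (r : ℕ → Bool) : boundedIntSeq :=
  ⟨fun k => (r (e k).1).toNat, 1, fun k => by dsimp only; cases r (e k).1 <;> decide⟩

lemma mk_ofBoolSeq_injective (e : ℤ ≃ ℕ × ℕ) :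
    Function.Injective fun r => (ofBoolSeq e r : boundedIntSeq ⧸ finitelySupported) := by
  intro r r' h
  by_contra hne
  obtain ⟨m, hm⟩ := Function.ne_iff.mp hne
  refine e.infinite_setOf_fst_eq m (Set.Finite.subset (QuotientAddGroup.eq.mp h.symm) ?_)
  intro k hk
  simp only [mem_ofPred_eq] at hk
  have htoNat : (r' m).toNat ≠ (r m).toNat := by
    revert hm; cases r m <;> cases r' m <;> decide
  simpa [Function.mem_support, ofBoolSeq, hk, neg_add_eq_zero] using htoNat

lemma continuum_le_mk_quotient : 𝔠 ≤ #(boundedIntSeq ⧸ finitelySupported) := by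
  have : #(ℕ → Bool) = 𝔠 := by simp [two_power_aleph0]
  exact this ▸ mk_le_of_injective (mk_ofBoolSeq_injective (Denumerable.equiv₂ ℤ (ℕ × ℕ)))

end boundedIntSeq

/-- The additive group of bounded integer sequences modulo those with finitely
many nonzero entries is a free abelian group of cardinality `2^ℵ₀` (the
continuum). -/
theorem boundedIntSeq_mod_finitelySupported_free_continuum :
    Module.Free ℤ (boundedIntSeq ⧸ finitelySupported) ∧
    Cardinal.mk (boundedIntSeq ⧸ finitelySupported) = Cardinal.continuum :=
  ⟨Module.Free.of_equiv boundedIntSeq.quotientEquiv.symm.toIntLinearEquiv,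
    le_antisymm boundedIntSeq.mk_quotient_le_continuum boundedIntSeq.continuum_le_mk_quotient⟩
end

section
/- In the finite CAR/Clifford setting with generators γ_{ij} (i,j ∈ [−N,N]) satisfying [γ_{ij}, γ_{kℓ}]₊ = 2δ_{iℓ}δ_{jk}, the normal-ordered spin operators s_{ij} = (1/2)Σ_ℓ :γ_{iℓ}γ_{ℓj}: satisfy the commutation relations [s_{ij}, s_{ℓm}] = δ_{jℓ}s_{im} − δ_{im}s_{ℓj} + δ_{jℓ}δ_{im}(ℓ−i), where the central term is independent of the cutoff N. -/
open Finset

/-- The cutoff index set `[-N, N] ⊂ ℤ`. -/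
noncomputable def cutoff (N : ℕ) : Finset ℤ := Finset.Icc (-(N : ℤ)) (N : ℤ)

/-- The normal-ordered spin operators
`s_{ij} = (1/2) Σ_ℓ :γ_{iℓ}γ_{ℓj}: = (1/2) Σ_ℓ γ_{iℓ}γ_{ℓj} − (N − i + 1/2)δ_{ij}`. -/
noncomputable def spinOp {A : Type*} [Ring A] [Algebra ℚ A] (N : ℕ)
    (γ : ℤ → ℤ → A) (i j : ℤ) : A :=
  (2 : ℚ)⁻¹ • ∑ l ∈ cutoff N, γ i l * γ l j -
    (if i = j then ((N : ℚ) - (i : ℚ) + (2 : ℚ)⁻¹) • (1 : A) else 0)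

/-!
Write `S_{ij} = Σ_a γ_{ia} γ_{aj}`. Since `[ab, c] = a{b, c} - {a, c}b`, the anticommutation
relations give `[S_{ij}, γ_{kn}] = 2(δ_{jk} γ_{in} - δ_{in} γ_{kj})`, and the Leibniz rule then
gives `[S_{ij}, S_{lm}] = 2(δ_{jl} S_{im} - δ_{im} S_{lj})`: the two boundary terms `2 γ_{lj} γ_{im}`
cancel. The normal-ordered `s_{ij}` differs from `S_{ij}/2` by the scalar `c_i δ_{ij}`,
`c_i = N - i + 1/2`, so it has the same commutators; rewriting `S_{im}/2` and `S_{lj}/2` back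
in terms of `s` leaves the central term `δ_{jl} δ_{im} (c_i - c_l) = δ_{jl} δ_{im} (l - i)`.
-/

section Clifford

variable {ι A : Type*} [DecidableEq ι] [Ring A]

def AnticommRelations (s : Finset ι) (γ : ι → ι → A) : Prop :=
  ∀ i ∈ s, ∀ j ∈ s, ∀ k ∈ s, ∀ l ∈ s,
    γ i j * γ k l + γ k l * γ i j = if i = l ∧ j = k then (2 : A) else 0

/-- `gammaSq (cutoff N) γ i j` is `2 s̃_{ij}`. -/
def gammaSq (s : Finset ι) (γ : ι → ι → A) (i j : ι) : A :=
  ∑ a ∈ s, γ i a * γ a j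

theorem mul_mul_sub_mul_eq_anticomm (a b c : A) :
    a * b * c - c * (a * b) = a * (b * c + c * b) - (a * c + c * a) * b := by
  noncomm_ring

theorem mul_mul_sub_mul_eq_leibniz (x y z : A) :
    x * (y * z) - y * z * x = (x * y - y * x) * z + y * (x * z - z * x) := by
  noncomm_ring

variable {s : Finset ι} {γ : ι → ι → A}

theorem gammaSq_mul_sub_mul_gamma (hγ : AnticommRelations s γ) {i j k n : ι}
    (hi : i ∈ s) (hj : j ∈ s) (hk : k ∈ s) (hn : n ∈ s) :
    gammaSq s γ i j * γ k n - γ k n * gammaSq s γ i j =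
      (if j = k then 2 * γ i n else 0) - (if i = n then 2 * γ k j else 0) := by
  rw [gammaSq, sum_mul, mul_sum, ← sum_sub_distrib]
  rw [sum_congr rfl fun a ha => by
    rw [mul_mul_sub_mul_eq_anticomm, hγ a ha j hj k hk n hn, hγ i hi a ha k hk n hn]]
  simp only [mul_ite, ite_mul, mul_zero, zero_mul, ite_and, sum_sub_distrib, sum_ite_eq',
    sum_ite_irrel, sum_const_zero, hn, hk, if_true, mul_two, two_mul]

theorem gammaSq_mul_sub_mul_gammaSq (hγ : AnticommRelations s γ) {i j l m : ι}
    (hi : i ∈ s) (hj : j ∈ s) (hl : l ∈ s) (hm : m ∈ s) :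
    gammaSq s γ i j * gammaSq s γ l m - gammaSq s γ l m * gammaSq s γ i j =
      (if j = l then 2 * gammaSq s γ i m else 0) - (if i = m then 2 * gammaSq s γ l j else 0) := by
  rw [show gammaSq s γ l m = ∑ b ∈ s, γ l b * γ b m from rfl, sum_mul, mul_sum,
    ← sum_sub_distrib]
  rw [sum_congr rfl fun b hb => by
    rw [mul_mul_sub_mul_eq_leibniz, gammaSq_mul_sub_mul_gamma hγ hi hj hl hb,
      gammaSq_mul_sub_mul_gamma hγ hi hj hb hm]]
  simp only [sub_mul, mul_sub, mul_ite, ite_mul, mul_zero, zero_mul, sum_add_distrib,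
    sum_sub_distrib, sum_ite_eq, sum_ite_irrel, sum_const_zero, hi, hj, if_true, gammaSq, mul_sum,
    two_mul, mul_add, add_mul]
  abel

end Clifford

theorem commutator_sub_algebraMap {R A : Type*} [CommSemiring R] [Ring A] [Algebra R A]
    (x y : A) (r t : R) :
    (x - algebraMap R A r) * (y - algebraMap R A t) -
        (y - algebraMap R A t) * (x - algebraMap R A r) = x * y - y * x := by
  simp only [sub_mul, mul_sub, Algebra.commutes r y, Algebra.commutes t x,
    Algebra.commutes r (algebraMap R A t)]
  abel

theorem spinOp_eq {A : Type*} [Ring A] [Algebra ℚ A] (N : ℕ) (γ : ℤ → ℤ → A) (i j : ℤ) :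
    spinOp N γ i j = (2⁻¹ : ℚ) • gammaSq (cutoff N) γ i j -
      algebraMap ℚ A (if i = j then (N : ℚ) - i + 2⁻¹ else 0) := by
  rw [spinOp, gammaSq, apply_ite (algebraMap ℚ A), map_zero, Algebra.algebraMap_eq_smul_one]

/-- In the finite cutoff Clifford algebra with generators `γ_{ij}`, `i,j ∈ [-N,N]`,
satisfying `[γ_{ij}, γ_{kℓ}]₊ = 2δ_{iℓ}δ_{jk}`, the normal-ordered spin operators
satisfy `[s_{ij}, s_{ℓm}] = δ_{jℓ}s_{im} − δ_{im}s_{ℓj} + δ_{jℓ}δ_{im}(ℓ−i)`, with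
central term independent of the cutoff `N`. -/
theorem spinOp_commutation {A : Type*} [Ring A] [Algebra ℚ A] (N : ℕ)
    (γ : ℤ → ℤ → A)
    (hγ : ∀ i ∈ cutoff N, ∀ j ∈ cutoff N, ∀ k ∈ cutoff N, ∀ l ∈ cutoff N,
      γ i j * γ k l + γ k l * γ i j =
        if i = l ∧ j = k then (2 : A) else 0)
    (i : ℤ) (hi : i ∈ cutoff N) (j : ℤ) (hj : j ∈ cutoff N)
    (l : ℤ) (hl : l ∈ cutoff N) (m : ℤ) (hm : m ∈ cutoff N) :
    spinOp N γ i j * spinOp N γ l m - spinOp N γ l m * spinOp N γ i j =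
      (if j = l then spinOp N γ i m else 0) -
      (if i = m then spinOp N γ l j else 0) +
      (if j = l ∧ i = m then ((l : ℚ) - (i : ℚ)) • (1 : A) else 0) := by
  calc _ = (2⁻¹ * 2⁻¹ : ℚ) • (gammaSq (cutoff N) γ i j * gammaSq (cutoff N) γ l m -
        gammaSq (cutoff N) γ l m * gammaSq (cutoff N) γ i j) := by
        rw [spinOp_eq, spinOp_eq, commutator_sub_algebraMap, smul_mul_smul_comm,
          smul_mul_smul_comm, smul_sub]
    _ = _ := by
        rw [gammaSq_mul_sub_mul_gammaSq hγ hi hj hl hm]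
        obtain rfl | hjl := eq_or_ne j l <;> obtain rfl | him := eq_or_ne i m
        · simp only [spinOp_eq, if_pos, and_self, two_mul, Algebra.algebraMap_eq_smul_one]
          module
        · simp only [spinOp_eq, him, ↓reduceIte, and_false, two_mul, map_zero]
          module
        · simp only [spinOp_eq, hjl, hjl.symm, ↓reduceIte, and_true, two_mul,
            Algebra.algebraMap_eq_smul_one]
          module
        · simp only [hjl, him, ↓reduceIte, and_self, sub_self, smul_zero, add_zero]
end

section
/- In the finite cutoff Clifford algebra, the identity Σ_{ℓ,m} [s_{ℓm}γ_{mℓ}, γ_{ij}]₊ = 6 s_{ij} − 4i·δ_{ij} holds, where [a,b]₊ = ab + ba. -/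
/-!
Write `E_{lm} = Σ_p γ_{lp}γ_{pm}`, so that `2 s_{lm} = E_{lm} - 2 c_l δ_{lm}` with the normal-ordering
constant `c_l = N - l + 1/2`. Expanding `E_{lm} γ_{ij}` with the anticommutation relations gives
`[s_{lm}, γ_{ij}] = δ_{mi} γ_{lj} - δ_{lj} γ_{im}`, hence
`{s_{lm} γ_{ml}, γ_{ij}} = s_{lm} {γ_{ml}, γ_{ij}} - [s_{lm}, γ_{ij}] γ_{ml}`.
Summing over `l, m`, the first term contributes `2 s_{ij}` and the second `Σ_l γ_{lj}γ_{il} - E_{ij}`,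
where `Σ_l γ_{lj}γ_{il} = 2 (2N + 1) δ_{ij} - E_{ij}`. Altogether the sum is
`2 s_{ij} + 2 E_{ij} - 2 (2N + 1) δ_{ij} = 6 s_{ij} + (4 c_i - 2 (2N + 1)) δ_{ij} = 6 s_{ij} - 4 i δ_{ij}`.
-/

open Finset

lemma mul_mul_eq_mul_mul_add_sub {R : Type*} [Ring R] (a b c : R) :
    a * b * c = c * (a * b) + a * (b * c + c * b) - (a * c + c * a) * b := by
  noncomm_ring

lemma mul_mul_add_mul_mul_eq {R : Type*} [Ring R] (s a b : R) :
    s * a * b + b * (s * a) = s * (a * b + b * a) - (s * b - b * s) * a := by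
  noncomm_ring

namespace CliffordCutoff

variable {ι A : Type*} [DecidableEq ι] [Ring A] {S : Finset ι} {γ : ι → ι → A}

def IsCliffordOn (S : Finset ι) (γ : ι → ι → A) : Prop :=
  ∀ i ∈ S, ∀ j ∈ S, ∀ k ∈ S, ∀ l ∈ S,
    γ i j * γ k l + γ k l * γ i j = if i = l ∧ j = k then 2 else 0

def gammaSq (S : Finset ι) (γ : ι → ι → A) (i j : ι) : A := ∑ p ∈ S, γ i p * γ p j

theorem IsCliffordOn.gammaSq_mul (hγ : IsCliffordOn S γ) {l m i j : ι}
    (hl : l ∈ S) (hm : m ∈ S) (hi : i ∈ S) (hj : j ∈ S) :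
    gammaSq S γ l m * γ i j = γ i j * gammaSq S γ l m +
      2 * ((if m = i then γ l j else 0) - (if l = j then γ i m else 0)) := by
  have hterm : ∀ p ∈ S, γ l p * γ p m * γ i j = γ i j * (γ l p * γ p m) +
      (γ l p * (if p = j ∧ m = i then 2 else 0) - (if l = j ∧ p = i then 2 else 0) * γ p m) := by
    intro p hp
    rw [mul_mul_eq_mul_mul_add_sub, hγ p hp m hm i hi j hj, hγ l hl p hp i hi j hj, add_sub_assoc]
  rw [gammaSq, sum_mul, sum_congr rfl hterm, sum_add_distrib, ← mul_sum, sum_sub_distrib]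
  congr 1
  by_cases hmi : m = i <;> by_cases hlj : l = j <;>
    simp [hmi, hlj, sum_ite_eq', hi, hj, mul_sub, two_mul, mul_two]

theorem IsCliffordOn.sum_mul_swap (hγ : IsCliffordOn S γ) {i j : ι} (hi : i ∈ S) (hj : j ∈ S) :
    ∑ p ∈ S, γ p j * γ i p = #S • (if i = j then 2 else 0) - gammaSq S γ i j := by
  rw [eq_sub_iff_add_eq, gammaSq, ← sum_add_distrib,
    sum_congr rfl fun p hp => hγ p hp j hj i hi p hp]
  simp [eq_comm]

variable [Algebra ℚ A]

def spin (S : Finset ι) (c : ι → ℚ) (γ : ι → ι → A) (i j : ι) : A :=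
  (2 : ℚ)⁻¹ • gammaSq S γ i j - if i = j then c i • (1 : A) else 0

lemma gammaSq_eq_two_smul_spin (c : ι → ℚ) (i j : ι) :
    gammaSq S γ i j = (2 : ℚ) • spin S c γ i j + if i = j then (2 * c i) • (1 : A) else 0 := by
  rw [spin]
  split_ifs <;> module

theorem IsCliffordOn.spin_mul (hγ : IsCliffordOn S γ) (c : ι → ℚ) {l m i j : ι}
    (hl : l ∈ S) (hm : m ∈ S) (hi : i ∈ S) (hj : j ∈ S) :
    spin S c γ l m * γ i j = γ i j * spin S c γ l m +
      ((if m = i then γ l j else 0) - (if l = j then γ i m else 0)) := by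
  have hscalar : (if l = m then c l • (1 : A) else 0) * γ i j =
      γ i j * (if l = m then c l • (1 : A) else 0) := by
    split_ifs <;> simp
  rw [spin, sub_mul, mul_sub, smul_mul_assoc, hγ.gammaSq_mul hl hm hi hj, hscalar, mul_smul_comm,
    two_mul, ← two_smul ℚ]
  module

theorem IsCliffordOn.spin_mul_gamma_anticomm (hγ : IsCliffordOn S γ) (c : ι → ℚ) {l m i j : ι}
    (hl : l ∈ S) (hm : m ∈ S) (hi : i ∈ S) (hj : j ∈ S) :
    spin S c γ l m * γ m l * γ i j + γ i j * (spin S c γ l m * γ m l) =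
      spin S c γ l m * (if m = j ∧ l = i then 2 else 0) -
        ((if m = i then γ l j else 0) - (if l = j then γ i m else 0)) * γ m l := by
  rw [mul_mul_add_mul_mul_eq, hγ m hm l hl i hi j hj, hγ.spin_mul c hl hm hi hj,
    add_sub_cancel_left]

theorem IsCliffordOn.sum_spin_mul_gamma_anticomm (hγ : IsCliffordOn S γ) (c : ι → ℚ) {i j : ι}
    (hi : i ∈ S) (hj : j ∈ S) :
    ∑ l ∈ S, ∑ m ∈ S, (spin S c γ l m * γ m l * γ i j + γ i j * (spin S c γ l m * γ m l)) =
      (6 : ℚ) • spin S c γ i j + if i = j then (4 * c i - 2 * #S) • (1 : A) else 0 := by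
  rw [sum_congr rfl fun l hl => sum_congr rfl fun m hm =>
    hγ.spin_mul_gamma_anticomm c hl hm hi hj]
  simp only [sub_mul, sum_sub_distrib, ite_mul, mul_ite, zero_mul, mul_zero, ite_and,
    sum_ite_irrel, sum_const_zero, sum_ite_eq', hi, hj, if_true]
  rw [hγ.sum_mul_swap hi hj, ← gammaSq, gammaSq_eq_two_smul_spin c, mul_two, ← two_smul ℚ]
  split_ifs
  · rw [← Nat.cast_smul_eq_nsmul ℚ,
      show (2 : A) = (2 : ℚ) • (1 : A) by rw [two_smul, one_add_one_eq_two]]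
    module
  · simp only [smul_zero, add_zero]
    module

end CliffordCutoff

open CliffordCutoff

lemma card_cutoff (N : ℕ) : #(cutoff N) = 2 * N + 1 := by
  simp only [cutoff, Int.card_Icc]
  omega

lemma spinOp_eq_spin {A : Type*} [Ring A] [Algebra ℚ A] (N : ℕ) :
    spinOp (A := A) N = spin (cutoff N) (fun i => (N : ℚ) - i + 2⁻¹) :=
  rfl

/-- In the finite cutoff Clifford algebra,
`Σ_{ℓ,m} [s_{ℓm}γ_{mℓ}, γ_{ij}]₊ = 6 s_{ij} − 4i δ_{ij}`. -/
theorem anticommutator_sum_spin_gamma {A : Type*} [Ring A] [Algebra ℚ A] (N : ℕ)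
    (γ : ℤ → ℤ → A)
    (hγ : ∀ i ∈ cutoff N, ∀ j ∈ cutoff N, ∀ k ∈ cutoff N, ∀ l ∈ cutoff N,
      γ i j * γ k l + γ k l * γ i j =
        if i = l ∧ j = k then (2 : A) else 0)
    (i : ℤ) (hi : i ∈ cutoff N) (j : ℤ) (hj : j ∈ cutoff N) :
    ∑ l ∈ cutoff N, ∑ m ∈ cutoff N,
        ((spinOp N γ l m * γ m l) * γ i j + γ i j * (spinOp N γ l m * γ m l)) =
      (6 : ℚ) • spinOp N γ i j -
        (if i = j then ((4 : ℚ) * (i : ℚ)) • (1 : A) else 0) := by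
  rw [spinOp_eq_spin, IsCliffordOn.sum_spin_mul_gamma_anticomm hγ _ hi hj, card_cutoff]
  split_ifs
  · push_cast
    module
  · simp
end

section
/- The cutoff cubic Dirac operator 𝔻 satisfies [𝔻, t_{ij}] = (i−j)(k+1)γ_{ij}, where t_{ij} = e_{ij} + s_{ij} and k is the level of the central extension in the e-sector. -/
open Finset

/-- The normal-ordered cubic sum
`Σ_{i,j} :s_{ij}γ_{ji}: = Σ_{i>j} s_{ij}γ_{ji} + Σ_{i≤j} γ_{ji}s_{ij}`. -/
noncomputable def normalOrderedCubic {A : Type*} [Ring A] [Algebra ℚ A] (N : ℕ)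
    (γ : ℤ → ℤ → A) : A :=
  ∑ i ∈ cutoff N, ∑ j ∈ cutoff N,
    if j < i then spinOp N γ i j * γ j i else γ j i * spinOp N γ i j

/-- The cutoff cubic Dirac operator
`𝔻 = Σ_{i,j} e_{ij}γ_{ji} + (1/3) Σ_{i,j} :s_{ij}γ_{ji}:`. -/
noncomputable def cubicDirac {A : Type*} [Ring A] [Algebra ℚ A] (N : ℕ)
    (E γ : ℤ → ℤ → A) : A :=
  (∑ i ∈ cutoff N, ∑ j ∈ cutoff N, E i j * γ j i) +
    (3 : ℚ)⁻¹ • normalOrderedCubic N γ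

/-- The total current `t_{ij} = e_{ij} + s_{ij}`. -/
noncomputable def totalCurrent {A : Type*} [Ring A] [Algebra ℚ A] (N : ℕ)
    (E γ : ℤ → ℤ → A) (i j : ℤ) : A :=
  E i j + spinOp N γ i j

/-!
Write `⁅x, y⁆ = x * y - y * x`. Under the total current `t = e + s`, each of the three families
`e`, `s`, `γ` transforms in the adjoint representation of `𝔤𝔩`, up to a central term: of level `k`
for `e` (as `s` commutes with `e`), of level `1` for `s` (the normal-ordering constants
`N - i + 1/2` differ by `l - i`) and of level `0` for `γ`. For any such family `X` of level `c`,
the adjoint actions on the two factors of `∑ X_ab γ_ba` cancel, leaving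
`⁅∑ X_ab γ_ba, t_pq⁆ = c (p - q) γ_pq`. Moving `γ` through `s` in the normal-ordered terms gives
`∑ :s_ab γ_ba: = ∑ s_ab γ_ba + 2 ∑ a γ_aa`, and the correction contributes `2 (p - q) γ_pq`.
Hence `⁅𝔻, t_pq⁆ = (k + (1 + 2) / 3) (p - q) γ_pq`.
-/

attribute [local instance] LieRing.ofAssociativeRing

namespace Ring

variable {R : Type*} [Ring R]

theorem mul_lie (a b c : R) : ⁅a * b, c⁆ = a * ⁅b, c⁆ + ⁅a, c⁆ * b := by
  simp only [Ring.lie_def]; noncomm_ring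

theorem mul_lie_eq_sub_anticomm (a b c : R) :
    ⁅a * b, c⁆ = a * (b * c + c * b) - (a * c + c * a) * b := by
  simp only [Ring.lie_def]; noncomm_ring

end Ring

section Currents

variable {A : Type*} [Ring A] [Algebra ℚ A]

-- With `X = T` this is the level-`c` central extension of `𝔤𝔩`, e.g. the relations of the `e_{ij}`.
def IsAdjointOfLevel (I : Finset ℤ) (c : ℤ) (T X : ℤ → ℤ → A) : Prop :=
  ∀ i ∈ I, ∀ j ∈ I, ∀ l ∈ I, ∀ m ∈ I, ⁅X i j, T l m⁆ =
    (if j = l then X i m else 0) - (if i = m then X l j else 0) +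
      (if j = l ∧ i = m then ((c * (l - i) : ℤ) : ℚ) • (1 : A) else 0)

theorem isAdjointOfLevel_zero_iff {I : Finset ℤ} {T X : ℤ → ℤ → A} :
    IsAdjointOfLevel I 0 T X ↔ ∀ i ∈ I, ∀ j ∈ I, ∀ l ∈ I, ∀ m ∈ I,
      ⁅X i j, T l m⁆ = (if j = l then X i m else 0) - (if i = m then X l j else 0) := by
  simp only [IsAdjointOfLevel, zero_mul, Int.cast_zero, zero_smul, ite_self, add_zero]

namespace IsAdjointOfLevel

variable {I : Finset ℤ} {c : ℤ} {T T' X : ℤ → ℤ → A}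

theorem add_right (h : IsAdjointOfLevel I c T X)
    (h' : ∀ i ∈ I, ∀ j ∈ I, ∀ l ∈ I, ∀ m ∈ I, ⁅X i j, T' l m⁆ = 0) :
    IsAdjointOfLevel I c (fun i j => T i j + T' i j) X := by
  intro i hi j hj l hl m hm
  rw [lie_add, h i hi j hj l hl m hm, h' i hi j hj l hl m hm, add_zero]

theorem add_left (h : IsAdjointOfLevel I c T X)
    (h' : ∀ i ∈ I, ∀ j ∈ I, ∀ l ∈ I, ∀ m ∈ I, ⁅X i j, T' l m⁆ = 0) :
    IsAdjointOfLevel I c (fun i j => T' i j + T i j) X := by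
  intro i hi j hj l hl m hm
  rw [lie_add, h i hi j hj l hl m hm, h' i hi j hj l hl m hm, zero_add]

variable {γ : ℤ → ℤ → A}

theorem lie_sum_mul (hX : IsAdjointOfLevel I c T X) (hγ : IsAdjointOfLevel I 0 T γ)
    {p q : ℤ} (hp : p ∈ I) (hq : q ∈ I) :
    ⁅∑ a ∈ I, ∑ b ∈ I, X a b * γ b a, T p q⁆ = ((c * (p - q) : ℤ) : ℚ) • γ p q := by
  have hterm : ∀ a ∈ I, ∀ b ∈ I, ⁅X a b * γ b a, T p q⁆ =
      X a b * ((if a = p then γ b q else 0) - (if b = q then γ p a else 0)) +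
        ((if b = p then X a q else 0) - (if a = q then X p b else 0) +
          (if b = p ∧ a = q then ((c * (p - a) : ℤ) : ℚ) • (1 : A) else 0)) * γ b a := by
    intro a ha b hb
    rw [Ring.mul_lie, isAdjointOfLevel_zero_iff.mp hγ b hb a ha p hp q hq, hX a ha b hb p hp q hq]
  simp only [sum_lie]
  rw [sum_congr rfl fun a ha => sum_congr rfl fun b hb => hterm a ha b hb]
  simp only [mul_sub, add_mul, sub_mul, mul_ite, ite_mul, mul_zero, zero_mul, ite_and,
    smul_mul_assoc, one_mul, sum_add_distrib, sum_sub_distrib, sum_ite_eq',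
    sum_ite_irrel, sum_const_zero, if_pos hp, if_pos hq]
  abel

theorem lie_sum_smul_diag (hγ : IsAdjointOfLevel I 0 T γ) (w : ℤ → ℚ)
    {p q : ℤ} (hp : p ∈ I) (hq : q ∈ I) :
    ⁅∑ a ∈ I, w a • γ a a, T p q⁆ = (w p - w q) • γ p q := by
  simp only [sum_lie, smul_lie]
  rw [sum_congr rfl fun a ha => by rw [isAdjointOfLevel_zero_iff.mp hγ a ha a ha p hp q hq]]
  simp only [smul_sub, smul_ite, smul_zero, sum_sub_distrib, sum_ite_eq', if_pos hp, if_pos hq,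
    sub_smul]

end IsAdjointOfLevel

end Currents

section Spin

variable {A : Type*} [Ring A] [Algebra ℚ A] {N : ℕ} {γ : ℤ → ℤ → A}

def IsCliffordFamily (I : Finset ℤ) (γ : ℤ → ℤ → A) : Prop :=
  ∀ i ∈ I, ∀ j ∈ I, ∀ l ∈ I, ∀ m ∈ I,
    γ i j * γ l m + γ l m * γ i j = if i = m ∧ j = l then (2 : A) else 0

theorem spinOp_lie (i j : ℤ) (x : A) :
    ⁅spinOp N γ i j, x⁆ = (2 : ℚ)⁻¹ • ⁅∑ l ∈ cutoff N, γ i l * γ l j, x⁆ := by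
  rw [spinOp, sub_lie, smul_lie]
  split_ifs <;> simp [Ring.lie_def]

theorem lie_spinOp_gamma (hγ : IsCliffordFamily (cutoff N) γ) {i j a b : ℤ}
    (hi : i ∈ cutoff N) (hj : j ∈ cutoff N) (ha : a ∈ cutoff N) (hb : b ∈ cutoff N) :
    ⁅spinOp N γ i j, γ a b⁆ = (if j = a then γ i b else 0) - (if i = b then γ a j else 0) := by
  rw [spinOp_lie, sum_lie, sum_congr rfl fun l hl => by
    rw [Ring.mul_lie_eq_sub_anticomm, hγ l hl j hj a ha b hb, hγ i hi l hl a ha b hb]]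
  simp only [mul_ite, ite_mul, mul_zero, zero_mul, ite_and, sum_sub_distrib,
    sum_ite_eq', if_pos hb, smul_sub, smul_ite, smul_zero, mul_two, two_mul,
    ← two_smul ℚ, smul_smul]
  norm_num [ha, smul_smul]

theorem isAdjointOfLevel_gamma (hγ : IsCliffordFamily (cutoff N) γ) :
    IsAdjointOfLevel (cutoff N) 0 (spinOp N γ) γ := by
  refine isAdjointOfLevel_zero_iff.mpr fun i hi j hj l hl m hm => ?_
  rw [← lie_skew, lie_spinOp_gamma hγ hl hm hi hj]
  simp only [neg_sub, eq_comm (a := m), eq_comm (a := l)]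

theorem half_sum_eq_spinOp_add (i j : ℤ) : (2 : ℚ)⁻¹ • ∑ l ∈ cutoff N, γ i l * γ l j =
    spinOp N γ i j + if i = j then ((N : ℚ) - (i : ℚ) + (2 : ℚ)⁻¹) • (1 : A) else 0 := by
  rw [spinOp, sub_add_cancel]

theorem isAdjointOfLevel_spinOp (hγ : IsCliffordFamily (cutoff N) γ) :
    IsAdjointOfLevel (cutoff N) 1 (spinOp N γ) (spinOp N γ) := by
  intro i hi j hj l hl m hm
  have hγs := isAdjointOfLevel_zero_iff.mp (isAdjointOfLevel_gamma hγ)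
  rw [spinOp_lie, sum_lie, sum_congr rfl fun n hn => by
    rw [Ring.mul_lie, hγs n hn j hj l hl m hm, hγs i hi n hn l hl m hm]]
  simp only [mul_sub, sub_mul, mul_ite, ite_mul, mul_zero, zero_mul, sum_add_distrib,
    sum_sub_distrib, sum_ite_eq', if_pos hm, if_pos hl, sum_ite_irrel, sum_const_zero,
    sub_add_sub_cancel, smul_sub, smul_ite, smul_zero, half_sum_eq_spinOp_add]
  by_cases hjl : j = l <;> by_cases him : i = m
  · subst hjl him
    simp only [if_true, and_self]
    rw [add_sub_add_comm, ← sub_smul]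
    congr 2
    push_cast
    ring
  · simp [hjl, him]
  · simp [hjl, him, Ne.symm hjl]
  · simp [hjl, him]

end Spin

section Counting

variable {N : ℕ}

theorem card_cutoff_filter_ge {a : ℤ} (ha : a ∈ cutoff N) :
    ((#{b ∈ cutoff N | a ≤ b} : ℕ) : ℤ) = N + 1 - a := by
  have hfilter : {b ∈ cutoff N | a ≤ b} = Icc a (N : ℤ) := by
    ext b; simp only [cutoff, mem_filter, mem_Icc] at ha ⊢; omega
  rw [hfilter, Int.card_Icc, Int.toNat_of_nonneg (by simp only [cutoff, mem_Icc] at ha; omega)]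

theorem card_cutoff_filter_le {a : ℤ} (ha : a ∈ cutoff N) :
    ((#{b ∈ cutoff N | b ≤ a} : ℕ) : ℤ) = a + N + 1 := by
  have hfilter : {b ∈ cutoff N | b ≤ a} = Icc (-(N : ℤ)) a := by
    ext b; simp only [cutoff, mem_filter, mem_Icc] at ha ⊢; omega
  rw [hfilter, Int.card_Icc, Int.toNat_of_nonneg (by simp only [cutoff, mem_Icc] at ha; omega)]
  ring

theorem sum_cutoff_sum_cutoff_ite_lt {M : Type*} [AddCommGroup M] (f : ℤ → M) :
    ∑ a ∈ cutoff N, ∑ b ∈ cutoff N, (if b < a then 0 else f a - f b) =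
      ∑ a ∈ cutoff N, (-2 * a) • f a := by
  have hsplit : ∀ a b : ℤ, (if b < a then 0 else f a - f b) =
      (if a ≤ b then f a else 0) - if a ≤ b then f b else 0 := by
    intro a b; split_ifs <;> first | omega | simp
  simp only [hsplit, sum_sub_distrib]
  rw [sum_comm (f := fun a b => if a ≤ b then f b else 0)]
  simp only [← sum_filter, sum_const]
  rw [← sum_sub_distrib]
  refine sum_congr rfl fun a ha => ?_
  rw [← natCast_zsmul, ← natCast_zsmul, card_cutoff_filter_ge ha, card_cutoff_filter_le ha,
    ← sub_smul]
  congr 1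
  ring

end Counting

section Dirac

variable {A : Type*} [Ring A] [Algebra ℚ A] {N : ℕ} {γ : ℤ → ℤ → A}

theorem normalOrderedCubic_eq (hγ : IsCliffordFamily (cutoff N) γ) :
    normalOrderedCubic N γ = ∑ a ∈ cutoff N, ∑ b ∈ cutoff N, spinOp N γ a b * γ b a +
      ∑ a ∈ cutoff N, (2 * a : ℚ) • γ a a := by
  have hterm : ∀ a ∈ cutoff N, ∀ b ∈ cutoff N,
      (if b < a then spinOp N γ a b * γ b a else γ b a * spinOp N γ a b) =
        spinOp N γ a b * γ b a - if b < a then 0 else γ a a - γ b b := by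
    intro a ha b hb
    have hlie := lie_spinOp_gamma hγ ha hb hb ha
    simp only [if_true] at hlie
    split_ifs
    · rw [sub_zero]
    · rw [← hlie, Ring.lie_def, sub_sub_cancel]
  rw [normalOrderedCubic, sum_congr rfl fun a ha => sum_congr rfl fun b hb => hterm a ha b hb]
  simp only [sum_sub_distrib]
  rw [sum_cutoff_sum_cutoff_ite_lt, sub_eq_add_neg, ← sum_neg_distrib]
  congr 1
  refine sum_congr rfl fun a _ => ?_
  rw [← neg_smul, ← Int.cast_smul_eq_zsmul ℚ]
  congr 1
  push_cast
  ring

theorem commute_spinOp {x : A} (hx : ∀ a ∈ cutoff N, ∀ b ∈ cutoff N, Commute x (γ a b))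
    {i j : ℤ} (hi : i ∈ cutoff N) (hj : j ∈ cutoff N) : Commute x (spinOp N γ i j) := by
  refine ((Commute.sum_right _ _ _ fun l hl => (hx i hi l hl).mul_right (hx l hl j hj)).smul_right
    _).sub_right ?_
  split_ifs
  · exact (Commute.one_right x).smul_right _
  · exact Commute.zero_right x

end Dirac

/-- The cutoff cubic Dirac operator satisfies `[𝔻, t_{ij}] = (i−j)(k+1) γ_{ij}` where
`t_{ij} = e_{ij} + s_{ij}`; the `e`-sector has relations of level `k` and commutes
with the Clifford sector. -/
theorem dirac_commutator_current {A : Type*} [Ring A] [Algebra ℚ A]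
    (N : ℕ) (k : ℤ) (E γ : ℤ → ℤ → A)
    (hγ : ∀ i ∈ cutoff N, ∀ j ∈ cutoff N, ∀ l ∈ cutoff N, ∀ m ∈ cutoff N,
      γ i j * γ l m + γ l m * γ i j = if i = m ∧ j = l then (2 : A) else 0)
    (hE : ∀ i ∈ cutoff N, ∀ j ∈ cutoff N, ∀ l ∈ cutoff N, ∀ m ∈ cutoff N,
      E i j * E l m - E l m * E i j =
        (if j = l then E i m else 0) - (if i = m then E l j else 0) +
          (if j = l ∧ i = m then ((k * (l - i) : ℤ) : ℚ) • (1 : A) else 0))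
    (hcomm : ∀ i ∈ cutoff N, ∀ j ∈ cutoff N, ∀ l ∈ cutoff N, ∀ m ∈ cutoff N,
      E i j * γ l m = γ l m * E i j)
    (i : ℤ) (hi : i ∈ cutoff N) (j : ℤ) (hj : j ∈ cutoff N) :
    cubicDirac N E γ * totalCurrent N E γ i j -
        totalCurrent N E γ i j * cubicDirac N E γ =
      (((i - j) * (k + 1) : ℤ) : ℚ) • γ i j := by
  have hEγ : ∀ a ∈ cutoff N, ∀ b ∈ cutoff N, ∀ l ∈ cutoff N, ∀ m ∈ cutoff N,
      Commute (E a b) (γ l m) := hcomm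
  have hEs : ∀ a ∈ cutoff N, ∀ b ∈ cutoff N, ∀ l ∈ cutoff N, ∀ m ∈ cutoff N,
      Commute (E a b) (spinOp N γ l m) := fun a ha b hb _ hl _ hm =>
    commute_spinOp (hEγ a ha b hb) hl hm
  have hγt : IsAdjointOfLevel (cutoff N) 0 (totalCurrent N E γ) γ :=
    (isAdjointOfLevel_gamma hγ).add_left fun a ha b hb l hl m hm =>
      (hEγ l hl m hm a ha b hb).symm.lie_eq
  have hEt : IsAdjointOfLevel (cutoff N) k (totalCurrent N E γ) E :=
    IsAdjointOfLevel.add_right hE fun a ha b hb l hl m hm => (hEs a ha b hb l hl m hm).lie_eq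
  have hst : IsAdjointOfLevel (cutoff N) 1 (totalCurrent N E γ) (spinOp N γ) :=
    (isAdjointOfLevel_spinOp hγ).add_left fun a ha b hb l hl m hm =>
      (hEs l hl m hm a ha b hb).symm.lie_eq
  rw [← Ring.lie_def, cubicDirac, normalOrderedCubic_eq hγ, add_lie, smul_lie, add_lie,
    hEt.lie_sum_mul hγt hi hj, hst.lie_sum_mul hγt hi hj, hγt.lie_sum_smul_diag _ hi hj,
    ← add_smul, smul_smul, ← add_smul]
  congr 1
  push_cast
  ring
end
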